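/- arXiv:1812.02048 — 3 statements merged into one kernel-verified Lean document; each statement's English description precedes it below -/
import Mathlib

section
/- The functions α and β defined from the truncated soliton tail satisfy the unitarity relation α(λ)·α^*(λ^*) + β(λ)·β^*(λ^*) = 1 for all complex λ ≠ −jσ_1. -/
open Complex Real

/-!
With the pole factors `a = 2jσ₁/(λ + jσ₁)`, `b = -2jσ₁/(λ - jσ₁)` and the weight
`p = e^{-2σ₁(T-t₀)}/D`, the unimodular phases of `β` and `β*` cancel and the left-hand side becomes
`(1 - p a)(1 - p b) + a b / D²`. This is `1` because the two pole factors satisfy `a + b = a b`, and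
because `e^{-x} e^{x} = 1` with `D = e^{-x} + e^{x}` gives `p² + 1/D² = p`.
-/

theorem one_sub_mul_mul_one_sub_mul_add_mul_eq_one {K : Type*} [Field K] {p q a b : K}
    (hab : a + b = a * b) (hpq : p ^ 2 + q = p) :
    (1 - p * a) * (1 - p * b) + q * (a * b) = 1 := by
  linear_combination (a * b) * hpq - p * hab

theorem two_mul_div_add_add_neg_two_mul_div_sub {K : Type*} [Field K] {i s z : K}
    (hadd : z + i * s ≠ 0) (hsub : z - i * s ≠ 0) :
    2 * i * s / (z + i * s) + -2 * i * s / (z - i * s)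
      = 2 * i * s / (z + i * s) * (-2 * i * s / (z - i * s)) := by
  field_simp
  ring

theorem div_add_sq_add_one_div_add_sq {K : Type*} [Field K] {P Q : K}
    (hPQ : P * Q = 1) (hD : P + Q ≠ 0) :
    (P / (P + Q)) ^ 2 + (1 / (P + Q)) ^ 2 = P / (P + Q) := by
  field_simp
  linear_combination -hPQ

theorem alpha_beta_unitarity_general (σ₁ T t₀ φ : ℝ) (N : ℕ)
    (D : ℝ) (hD : D = Real.exp (-2*σ₁*(T - t₀)) + Real.exp (2*σ₁*(T - t₀)))
    (α β αs βs : ℂ → ℂ)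
    (hα : ∀ z, α z = 1 - ((Real.exp (-2*σ₁*(T - t₀)) / D : ℝ) : ℂ) *
        (2*I*σ₁ / (z + I*σ₁)))
    (hαs : ∀ z, αs z = 1 - ((Real.exp (-2*σ₁*(T - t₀)) / D : ℝ) : ℂ) *
        (-2*I*σ₁ / (z - I*σ₁)))
    (hβ : ∀ z, β z = Complex.exp (I*(φ + N*Real.pi)) * (-2*I*σ₁ / (z + I*σ₁)) *
        Complex.exp (2*I*z*T) / (D : ℂ))
    (hβs : ∀ z, βs z = Complex.exp (-I*(φ + N*Real.pi)) * (2*I*σ₁ / (z - I*σ₁)) *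
        Complex.exp (-2*I*z*T) / (D : ℂ))
    (z : ℂ) (hz₁ : z ≠ I*σ₁) (hz₂ : z ≠ -I*σ₁) :
    α z * αs z + β z * βs z = 1 := by
  have hadd : z + I*σ₁ ≠ 0 := by rwa [← sub_neg_eq_add, sub_ne_zero, ← neg_mul]
  have hsub : z - I*σ₁ ≠ 0 := sub_ne_zero.mpr hz₁
  have hphase : Complex.exp (I*(φ + N*Real.pi)) * Complex.exp (-I*(φ + N*Real.pi)) = 1 := by
    rw [← Complex.exp_add, ← add_mul, add_neg_cancel, zero_mul, Complex.exp_zero]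
  have hosc : Complex.exp (2*I*z*T) * Complex.exp (-2*I*z*T) = 1 := by
    rw [← Complex.exp_add]; ring_nf; exact Complex.exp_zero
  have hββ : β z * βs z = ((1 / D) ^ 2 : ℝ) * (2*I*σ₁ / (z + I*σ₁) * (-2*I*σ₁ / (z - I*σ₁))) := by
    rw [hβ, hβs]
    push_cast
    linear_combination (2*I*σ₁ / (z + I*σ₁) * (-2*I*σ₁ / (z - I*σ₁)) / (D : ℂ) ^ 2) *
      (Complex.exp (2*I*z*T) * Complex.exp (-2*I*z*T) * hphase + hosc)
  have hweights : ((Real.exp (-2*σ₁*(T - t₀)) / D : ℝ) : ℂ) ^ 2 + ((1 / D) ^ 2 : ℝ)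
      = ((Real.exp (-2*σ₁*(T - t₀)) / D : ℝ) : ℂ) := by
    have hPQ : Real.exp (-2*σ₁*(T - t₀)) * Real.exp (2*σ₁*(T - t₀)) = 1 := by
      rw [← Real.exp_add]; ring_nf; exact Real.exp_zero
    have hsum : Real.exp (-2*σ₁*(T - t₀)) + Real.exp (2*σ₁*(T - t₀)) ≠ 0 := by positivity
    rw [hD]
    exact_mod_cast congrArg ((↑) : ℝ → ℂ) (div_add_sq_add_one_div_add_sq hPQ hsum)
  rw [hα, hαs, hββ]
  exact one_sub_mul_mul_one_sub_mul_add_mul_eq_one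
    (two_mul_div_add_add_neg_two_mul_div_sub hadd hsub) hweights

theorem alpha_beta_unitarity (σ₁ T t₀ φ : ℝ) (N : ℕ) (hσ : 0 < σ₁)
    (D : ℝ) (hD : D = Real.exp (-2*σ₁*(T - t₀)) + Real.exp (2*σ₁*(T - t₀)))
    (α β αs βs : ℂ → ℂ)
    (hα : ∀ z, α z = 1 - ((Real.exp (-2*σ₁*(T - t₀)) / D : ℝ) : ℂ) *
        (2*I*σ₁ / (z + I*σ₁)))
    (hαs : ∀ z, αs z = 1 - ((Real.exp (-2*σ₁*(T - t₀)) / D : ℝ) : ℂ) *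
        (-2*I*σ₁ / (z - I*σ₁)))
    (hβ : ∀ z, β z = Complex.exp (I*(φ + N*Real.pi)) * (-2*I*σ₁ / (z + I*σ₁)) *
        Complex.exp (2*I*z*T) / (D : ℂ))
    (hβs : ∀ z, βs z = Complex.exp (-I*(φ + N*Real.pi)) * (2*I*σ₁ / (z - I*σ₁)) *
        Complex.exp (-2*I*z*T) / (D : ℂ))
    (z : ℂ) (hz₁ : z ≠ I*σ₁) (hz₂ : z ≠ -I*σ₁) :
    α z * αs z + β z * βs z = 1 :=
  alpha_beta_unitarity_general σ₁ T t₀ φ N D hD α β αs βs hα hαs hβ hβs z hz₁ hz₂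
end

section
/- For real frequencies ω, the functions α and β satisfy |α(ω)|² + |β(ω)|² = 1. -/
open Complex Real

/-!
Write `w = 2iσ₁/(ω + iσ₁)`, so that `α(ω) = 1 - r w` and `|β(ω)| = s |w|` with `r = e⁻/D`,
`s = 1/D`, where `e^± = e^{±2σ₁(T-t₀)}`. Since `1 - w = conj z / z` for `z = ω + iσ₁`, the number
`u = 1 - w` is unimodular, and for unimodular `u` the quantity `|1 - r(1 - u)|² + s²|1 - u|²`
is affine in `Re u` with slope `2(r(1 - r) - s²)` and value `1` at `u = 1`. Here
`r(1 - r) = e⁻e⁺/D² = s²` because `e⁻e⁺ = 1`.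
-/

lemma Complex.norm_one_sub_two_mul_I_mul_im_div_self (z : ℂ) :
    ‖1 - 2 * I * z.im / z‖ = 1 := by
  rcases eq_or_ne z 0 with rfl | hz
  · simp
  have hconj : 1 - 2 * I * z.im / z = (starRingEnd ℂ) z / z := by
    have h := Complex.sub_conj z
    push_cast at h
    field_simp
    linear_combination h
  rw [hconj, norm_div, Complex.norm_conj, div_self (norm_ne_zero_iff.mpr hz)]

lemma Complex.norm_one_sub_mul_sq_add_sq_mul_norm_sq {w : ℂ} (hw : ‖1 - w‖ = 1) {r s : ℝ}
    (hrs : s ^ 2 = r * (1 - r)) :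
    ‖1 - r * w‖ ^ 2 + s ^ 2 * ‖w‖ ^ 2 = 1 := by
  have hu : Complex.normSq (1 - w) = 1 := by rw [← Complex.sq_norm, hw, one_pow]
  rw [Complex.sq_norm, Complex.sq_norm]
  simp only [Complex.normSq_apply] at hu ⊢
  simp only [Complex.sub_re, Complex.sub_im, Complex.mul_re, Complex.mul_im, Complex.ofReal_re,
    Complex.ofReal_im, Complex.one_re, Complex.one_im] at hu ⊢
  linear_combination (1 - r * (1 - r) - (1 - r) ^ 2) * hu + (w.re ^ 2 + w.im ^ 2) * hrs

lemma one_div_add_sq_eq_of_mul_eq_one {e f : ℝ} (hef : e * f = 1) :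
    (1 / (e + f)) ^ 2 = e / (e + f) * (1 - e / (e + f)) := by
  have hsum : e + f ≠ 0 := by
    intro h
    rw [eq_neg_of_add_eq_zero_right h] at hef
    nlinarith [sq_nonneg e]
  field_simp
  linear_combination -hef

theorem alpha_beta_abs_sq_sum_one_general (σ₁ T t₀ φ : ℝ) (N : ℕ)
    (D : ℝ) (hD : D = Real.exp (-2*σ₁*(T - t₀)) + Real.exp (2*σ₁*(T - t₀)))
    (α β : ℂ → ℂ)
    (hα : ∀ z, α z = 1 - ((Real.exp (-2*σ₁*(T - t₀)) / D : ℝ) : ℂ) *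
        (2*I*σ₁ / (z + I*σ₁)))
    (hβ : ∀ z, β z = Complex.exp (I*(φ + N*Real.pi)) * (-2*I*σ₁ / (z + I*σ₁)) *
        Complex.exp (2*I*z*T) / (D : ℂ))
    (ω : ℝ) :
    ‖α (ω : ℂ)‖ ^ 2 + ‖β (ω : ℂ)‖ ^ 2 = 1 := by
  set w : ℂ := 2 * I * σ₁ / (ω + I * σ₁)
  have hw : ‖1 - w‖ = 1 := by
    simpa using Complex.norm_one_sub_two_mul_I_mul_im_div_self (ω + I * σ₁)
  have hβ_norm : ‖β ω‖ = ‖w‖ / |D| := by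
    have hphase : ‖cexp (I * (φ + N * π))‖ = 1 := by simp [Complex.norm_exp]
    have hshift : ‖cexp (2 * I * ω * T)‖ = 1 := by simp [Complex.norm_exp]
    rw [hβ, norm_div, norm_mul, norm_mul, hphase, hshift, neg_mul, neg_mul, neg_div, norm_neg,
      Complex.norm_real, Real.norm_eq_abs, one_mul, mul_one]
  have hrs := one_div_add_sq_eq_of_mul_eq_one
    (e := Real.exp (-2*σ₁*(T - t₀))) (f := Real.exp (2*σ₁*(T - t₀)))
    (by rw [← Real.exp_add]; simp)
  rw [← hD] at hrs
  rw [hα, hβ_norm]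
  convert Complex.norm_one_sub_mul_sq_add_sq_mul_norm_sq hw hrs using 2
  rw [div_pow, sq_abs]
  ring

theorem alpha_beta_abs_sq_sum_one (σ₁ T t₀ φ : ℝ) (N : ℕ) (hσ : 0 < σ₁)
    (D : ℝ) (hD : D = Real.exp (-2*σ₁*(T - t₀)) + Real.exp (2*σ₁*(T - t₀)))
    (α β : ℂ → ℂ)
    (hα : ∀ z, α z = 1 - ((Real.exp (-2*σ₁*(T - t₀)) / D : ℝ) : ℂ) *
        (2*I*σ₁ / (z + I*σ₁)))
    (hβ : ∀ z, β z = Complex.exp (I*(φ + N*Real.pi)) * (-2*I*σ₁ / (z + I*σ₁)) *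
        Complex.exp (2*I*z*T) / (D : ℂ))
    (ω : ℝ) :
    ‖α (ω : ℂ)‖ ^ 2 + ‖β (ω : ℂ)‖ ^ 2 = 1 :=
  alpha_beta_abs_sq_sum_one_general σ₁ T t₀ φ N D hD α β hα hβ ω
end

section
/- The pair (v_1, v_2) given explicitly in terms of sech-type expressions solves the Zakharov–Shabat system with the one-soliton tail potential q(t) = −2σ_1 e^{−jφ_L − 2jω_1 t} sech(2σ_1(t−t_L)). -/
open Complex Real

/-!
Write `E = e^{2σ₁(t - t_L)}` and `D = E + E⁻¹ = 2 cosh (2σ₁(t - t_L))`. Since `E' = 2σ₁ E` and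
`E E⁻¹ = 1`, one has `(E / D)' = 4σ₁ / D²`, and both sides of the first equation equal
`-4σ₁ c / D²` with `c = 2jσ₁ / (λ - ω₁ + jσ₁)`. For the second equation, `q̄` on the real line is
`-4σ₁ e^{jφ_L + 2jω₁t} / D`; after clearing `D²` both sides differ by a multiple of
`c (λ - ω₁ + jσ₁) - 2jσ₁`, which vanishes by the choice of `c`.
-/

namespace OneSoliton

variable (σ ω φ tL : ℝ) (lam : ℂ)

noncomputable def twoCosh (z : ℂ) : ℂ := cexp (2*σ*(z - tL)) + cexp (-2*σ*(z - tL))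

theorem exp_mul_exp_neg (z : ℂ) : cexp (2*σ*(z - tL)) * cexp (-2*σ*(z - tL)) = 1 := by
  rw [← Complex.exp_add, ← Complex.exp_zero]
  congr 1
  ring

theorem twoCosh_eq (z : ℂ) : twoCosh σ tL z = 2 * cosh (2*σ*(z - tL)) := by
  rw [twoCosh, two_cosh, neg_mul, neg_mul]

theorem twoCosh_ofReal_ne_zero (t : ℝ) : twoCosh σ tL t ≠ 0 := by
  rw [twoCosh_eq]
  exact_mod_cast (by positivity : (0:ℝ) < 2 * Real.cosh (2*σ*(t - tL))).ne'

theorem hasDerivAt_exp_mul_sub (a b z : ℂ) :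
    HasDerivAt (fun w => cexp (a * (w - b))) (a * cexp (a * (z - b))) z := by
  simpa [mul_comm] using (((hasDerivAt_id z).sub_const b).const_mul a).cexp

theorem hasDerivAt_twoCosh (z : ℂ) :
    HasDerivAt (twoCosh σ tL) (2*σ * (cexp (2*σ*(z - tL)) - cexp (-2*σ*(z - tL)))) z :=
  ((hasDerivAt_exp_mul_sub (2*σ) tL z).add (hasDerivAt_exp_mul_sub (-2*σ) tL z)).congr_deriv
    (by ring)

theorem hasDerivAt_exp_div_twoCosh (z : ℂ) (hz : twoCosh σ tL z ≠ 0) :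
    HasDerivAt (fun w => cexp (2*σ*(w - tL)) / twoCosh σ tL w) (4*σ / twoCosh σ tL z ^ 2) z := by
  refine ((hasDerivAt_exp_mul_sub (2*σ) tL z).div (hasDerivAt_twoCosh σ tL z) hz).congr_deriv ?_
  have := exp_mul_exp_neg σ tL z
  unfold twoCosh at hz ⊢
  generalize cexp (2*σ*(z - tL)) = E, cexp (-2*σ*(z - tL)) = E' at *
  field_simp
  linear_combination 4*σ * this

noncomputable def coeff : ℂ := 2*I*σ / (lam - ω + I*σ)

theorem coeff_mul (hlam : lam ≠ ω - I*σ) : coeff σ ω lam * (lam - ω + I*σ) = 2*I*σ :=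
  div_mul_cancel₀ _ fun h => hlam (by linear_combination h)

noncomputable def potential (t : ℝ) : ℂ :=
  -2*σ * cexp (-I*φ - 2*I*ω*t) / Complex.cosh (2*σ*(t - tL))

noncomputable def jost₁ (z : ℂ) : ℂ :=
  1 - (cexp (2*σ*(z - tL)) / twoCosh σ tL z) * coeff σ ω lam

noncomputable def jost₂ (z : ℂ) : ℂ :=
  coeff σ ω lam * cexp (I*φ + 2*I*ω*z) * cexp (-2*I*lam*z) / twoCosh σ tL z

theorem potential_eq (t : ℝ) :
    potential σ ω φ tL t = -4*σ / (cexp (I*φ + 2*I*ω*t) * twoCosh σ tL t) := by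
  rw [potential, twoCosh_eq, show -I*φ - 2*I*ω*t = -(I*φ + 2*I*ω*(t:ℂ)) by ring, Complex.exp_neg]
  field_simp
  ring

theorem conj_potential (t : ℝ) :
    starRingEnd ℂ (potential σ ω φ tL t) = -4*σ * cexp (I*φ + 2*I*ω*t) / twoCosh σ tL t := by
  have harg : starRingEnd ℂ (-I*φ - 2*I*ω*t) = I*φ + 2*I*ω*t := by
    simp only [map_sub, map_neg, map_mul, map_ofNat, conj_I, conj_ofReal]
    ring
  have hcosh : starRingEnd ℂ (Complex.cosh (2*σ*(t - tL))) = Complex.cosh (2*σ*(t - tL)) := by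
    rw [← cosh_conj]
    simp only [map_mul, map_sub, map_ofNat, conj_ofReal]
  rw [potential, map_div₀, map_mul, ← exp_conj, harg, hcosh, twoCosh_eq]
  simp only [map_mul, map_neg, map_ofNat, conj_ofReal]
  field_simp
  ring

theorem hasDerivAt_jost₁ (t : ℝ) :
    HasDerivAt (fun s : ℝ => jost₁ σ ω tL lam s)
      (potential σ ω φ tL t * cexp (2*I*lam*t) * jost₂ σ ω φ tL lam t) t := by
  have hD := twoCosh_ofReal_ne_zero σ tL t
  refine ((hasDerivAt_exp_div_twoCosh σ tL t hD).mul_const (coeff σ ω lam)).const_sub 1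
    |>.comp_ofReal |>.congr_deriv ?_
  rw [potential_eq, jost₂, show 2*I*lam*t = -(-2*I*lam*(t:ℂ)) by ring, Complex.exp_neg]
  have hM := Complex.exp_ne_zero (-2*I*lam*t)
  have hP := Complex.exp_ne_zero (I*φ + 2*I*ω*t)
  field_simp

theorem hasDerivAt_jost₂ (hlam : lam ≠ ω - I*σ) (t : ℝ) :
    HasDerivAt (fun s : ℝ => jost₂ σ ω φ tL lam s)
      (-starRingEnd ℂ (potential σ ω φ tL t) * cexp (-2*I*lam*t) * jost₁ σ ω tL lam t) t := by
  have hD := twoCosh_ofReal_ne_zero σ tL t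
  have hP := (((hasDerivAt_id (t:ℂ)).const_mul (2*I*ω)).const_add (I*φ)).cexp
  have hM := ((hasDerivAt_id (t:ℂ)).const_mul (-2*I*lam)).cexp
  refine ((hP.const_mul (coeff σ ω lam)).mul hM).div (hasDerivAt_twoCosh σ tL t) hD
    |>.comp_ofReal |>.congr_deriv ?_
  have hc := coeff_mul σ ω lam hlam
  rw [conj_potential, jost₁]
  simp only [id, Pi.mul_apply, mul_one]
  unfold twoCosh at hD ⊢
  generalize coeff σ ω lam = c at *
  generalize cexp (2*σ*(t - tL)) = E, cexp (-2*σ*(t - tL)) = E' at hD ⊢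
  generalize cexp (I*φ + 2*I*ω*t) = P, cexp (-2*I*lam*t) = M
  field_simp
  linear_combination 2*P*M*(E + E') * (-I*hc + (c - 2)*σ*I_sq)

end OneSoliton

open OneSoliton in
theorem jost_solution_solves_ZS_general (σ₁ ω₁ φL tL : ℝ) (lam : ℂ)
    (hlam : lam ≠ (ω₁ : ℂ) - I*σ₁)
    (q v₁ v₂ : ℝ → ℂ)
    (hq : ∀ t, q t = -2*σ₁ * Complex.exp (-I*φL - 2*I*ω₁*t) /
        Complex.cosh (2*σ₁*(t - tL)))
    (hv₁ : ∀ t, v₁ t = 1 - (Complex.exp (2*σ₁*((t:ℂ) - tL)) /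
        (Complex.exp (2*σ₁*((t:ℂ) - tL)) + Complex.exp (-2*σ₁*((t:ℂ) - tL)))) *
        (2*I*σ₁ / (lam - ω₁ + I*σ₁)))
    (hv₂ : ∀ t, v₂ t = (2*I*σ₁ / (lam - ω₁ + I*σ₁)) *
        Complex.exp (I*φL + 2*I*ω₁*t) * Complex.exp (-2*I*lam*t) /
        (Complex.exp (2*σ₁*((t:ℂ) - tL)) + Complex.exp (-2*σ₁*((t:ℂ) - tL)))) :
    ∀ t : ℝ,
      HasDerivAt v₁ (q t * Complex.exp (2*I*lam*t) * v₂ t) t ∧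
      HasDerivAt v₂ (-(starRingEnd ℂ) (q t) * Complex.exp (-2*I*lam*t) * v₁ t) t := by
  obtain rfl : q = potential σ₁ ω₁ φL tL := funext hq
  obtain rfl : v₁ = fun t : ℝ => jost₁ σ₁ ω₁ tL lam t := funext hv₁
  obtain rfl : v₂ = fun t : ℝ => jost₂ σ₁ ω₁ φL tL lam t := funext hv₂
  exact fun t => ⟨hasDerivAt_jost₁ σ₁ ω₁ φL tL lam t, hasDerivAt_jost₂ σ₁ ω₁ φL tL lam hlam t⟩

theorem jost_solution_solves_ZS (σ₁ ω₁ φL tL : ℝ) (hσ : 0 < σ₁) (lam : ℂ)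
    (hlam : lam ≠ (ω₁ : ℂ) - I*σ₁)
    (q v₁ v₂ : ℝ → ℂ)
    (hq : ∀ t, q t = -2*σ₁ * Complex.exp (-I*φL - 2*I*ω₁*t) /
        Complex.cosh (2*σ₁*(t - tL)))
    (hv₁ : ∀ t, v₁ t = 1 - (Complex.exp (2*σ₁*((t:ℂ) - tL)) /
        (Complex.exp (2*σ₁*((t:ℂ) - tL)) + Complex.exp (-2*σ₁*((t:ℂ) - tL)))) *
        (2*I*σ₁ / (lam - ω₁ + I*σ₁)))
    (hv₂ : ∀ t, v₂ t = (2*I*σ₁ / (lam - ω₁ + I*σ₁)) *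
        Complex.exp (I*φL + 2*I*ω₁*t) * Complex.exp (-2*I*lam*t) /
        (Complex.exp (2*σ₁*((t:ℂ) - tL)) + Complex.exp (-2*σ₁*((t:ℂ) - tL)))) :
    ∀ t : ℝ,
      HasDerivAt v₁ (q t * Complex.exp (2*I*lam*t) * v₂ t) t ∧
      HasDerivAt v₂ (-(starRingEnd ℂ) (q t) * Complex.exp (-2*I*lam*t) * v₁ t) t :=
  jost_solution_solves_ZS_general σ₁ ω₁ φL tL lam hlam q v₁ v₂ hq hv₁ hv₂
end
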